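/- arXiv:2512.00629 — 2 statements merged into one kernel-verified Lean document; each statement's English description precedes it below -/
import Mathlib

section
/- If Ω = {x : Hx ≤ 1} is a polytope equal to the convex hull of vertices {v^p}, W has support function φ_W, and for each vertex p there exists u^p ∈ U (U convex) such that for every facet i, ⟨H_i, f(v^p, u^p)⟩ ≤ F_i(v^p,u^p) ≤ λ − φ_W(H_i) with F_i jointly convex in (x,u) and F_i an upper bound of ⟨H_i, f(·,·)⟩ on Ω × U, then for every x ∈ Ω there exists u ∈ U such that f(x,u) + w ∈ λΩ for all w ∈ W. -/
/-!
Writing `x` as a convex combination of the vertices `v p` and taking for `u'` the same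
combination of the `u p`, the pair `(x, u')` lies in the convex hull of the pairs `(v p, u p)`.
By the maximum principle for the convex `F i`, `F i (x, u') ≤ F i (v p, u p) ≤ λ - φ_W(H i)` for
some `p`, and `⟨H i, w⟩ ≤ φ_W(H i)` for `w ∈ W` absorbs the disturbance.
-/

open Set

theorem exists_prod_mem_convexHull_range {𝕜 ι E G : Type*} [Field 𝕜] [LinearOrder 𝕜]
    [IsStrictOrderedRing 𝕜] [AddCommGroup E] [Module 𝕜 E] [AddCommGroup G] [Module 𝕜 G]
    {v : ι → E} {u : ι → G} {x : E} (hx : x ∈ convexHull 𝕜 (range v)) :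
    ∃ y ∈ convexHull 𝕜 (range u), (x, y) ∈ convexHull 𝕜 (range fun p => (v p, u p)) := by
  have hfst : range v = LinearMap.fst 𝕜 E G '' range fun p => (v p, u p) := by
    rw [← range_comp]; rfl
  have hsnd : range u = LinearMap.snd 𝕜 E G '' range fun p => (v p, u p) := by
    rw [← range_comp]; rfl
  rw [hfst, ← LinearMap.image_convexHull] at hx
  obtain ⟨⟨x', y⟩, hxy, rfl⟩ := hx
  refine ⟨y, ?_, hxy⟩
  rw [hsnd, ← LinearMap.image_convexHull]
  exact ⟨_, hxy, rfl⟩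

theorem le_sSup_image_of_isBounded {E : Type*} [PseudoMetricSpace E] [ProperSpace E]
    {f : E → ℝ} (hf : Continuous f) {W : Set E} (hW : Bornology.IsBounded W) {w : E}
    (hw : w ∈ W) : f w ≤ sSup (f '' W) :=
  le_csSup ((hW.isCompact_closure.bddAbove_image hf.continuousOn).mono
    (image_mono subset_closure)) ⟨w, hw, rfl⟩

theorem stmt7_general {n m nh nv : ℕ} (H : Fin nh → (Fin n → ℝ))
    (Ω : Set (Fin n → ℝ))
    (v : Fin nv → (Fin n → ℝ)) (hΩhull : Ω = convexHull ℝ (Set.range v))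
    (U : Set (Fin m → ℝ)) (hU : Convex ℝ U)
    (W : Set (Fin n → ℝ)) (hWbd : Bornology.IsBounded W)
    (φW : (Fin n → ℝ) → ℝ)
    (hφW : ∀ c, φW c = sSup ((fun w => ∑ i, c i * w i) '' W))
    (lam : ℝ)
    (f : (Fin n → ℝ) → (Fin m → ℝ) → (Fin n → ℝ))
    (F : Fin nh → ((Fin n → ℝ) × (Fin m → ℝ)) → ℝ)
    (hFconv : ∀ i, ConvexOn ℝ (Ω ×ˢ U) (F i))
    (hFub : ∀ i, ∀ x ∈ Ω, ∀ u ∈ U, (∑ k, H i k * f x u k) ≤ F i (x, u))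
    (u : Fin nv → (Fin m → ℝ)) (hu : ∀ p, u p ∈ U)
    (hvert : ∀ i p, F i (v p, u p) ≤ lam - φW (H i)) :
    ∀ x ∈ Ω, ∃ u' ∈ U, ∀ w ∈ W, ∀ i, (∑ k, H i k * (f x u' k + w k)) ≤ lam := by
  intro x hx
  obtain ⟨u', hu'hull, hxu'⟩ := exists_prod_mem_convexHull_range (u := u) (hΩhull ▸ hx)
  have hu' : u' ∈ U := hU.convexHull_subset_iff.2 (range_subset_iff.2 hu) hu'hull
  refine ⟨u', hu', fun w hw i => ?_⟩
  have hvertΩU : (range fun p => (v p, u p)) ⊆ Ω ×ˢ U := by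
    rintro _ ⟨p, rfl⟩
    exact ⟨hΩhull ▸ subset_convexHull ℝ _ ⟨p, rfl⟩, hu p⟩
  obtain ⟨_, ⟨p, rfl⟩, hFp⟩ := (hFconv i).exists_ge_of_mem_convexHull hvertΩU hxu'
  have hφ : ∑ k, H i k * w k ≤ φW (H i) :=
    hφW (H i) ▸ le_sSup_image_of_isBounded (f := fun w => ∑ k, H i k * w k) (by fun_prop)
      hWbd hw
  calc ∑ k, H i k * (f x u' k + w k) = ∑ k, H i k * f x u' k + ∑ k, H i k * w k := by
        simp only [mul_add, Finset.sum_add_distrib]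
    _ ≤ F i (x, u') + φW (H i) := add_le_add (hFub i x hx u' hu') hφ
    _ ≤ lam := by linarith [hvert i p]

/-- Vertex condition implies one-step robust contraction: if `Ω = {x : Hx ≤ 1}` equals
the convex hull of its vertices `v p`, `U` is convex, each `F i` is jointly convex on
`Ω × U` and upper bounds `⟨H i, f(·,·)⟩` there, and at each vertex there is `u p ∈ U`
with `F i (v p, u p) ≤ λ - φ_W(H i)` for every facet `i`, then for every `x ∈ Ω` there
exists `u ∈ U` with `f x u + w ∈ λΩ = {x : Hx ≤ λ·1}` for all `w ∈ W`. -/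
theorem stmt7 {n m nh nv : ℕ} (H : Fin nh → (Fin n → ℝ))
    (Ω : Set (Fin n → ℝ)) (hΩdef : Ω = {x | ∀ i, (∑ k, H i k * x k) ≤ 1})
    (v : Fin nv → (Fin n → ℝ)) (hΩhull : Ω = convexHull ℝ (Set.range v))
    (U : Set (Fin m → ℝ)) (hU : Convex ℝ U)
    (W : Set (Fin n → ℝ)) (hWne : W.Nonempty) (hWbd : Bornology.IsBounded W)
    (φW : (Fin n → ℝ) → ℝ)
    (hφW : ∀ c, φW c = sSup ((fun w => ∑ i, c i * w i) '' W))
    (lam : ℝ) (hlam : lam ∈ Set.Icc (0 : ℝ) 1)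
    (f : (Fin n → ℝ) → (Fin m → ℝ) → (Fin n → ℝ))
    (F : Fin nh → ((Fin n → ℝ) × (Fin m → ℝ)) → ℝ)
    (hFconv : ∀ i, ConvexOn ℝ (Ω ×ˢ U) (F i))
    (hFub : ∀ i, ∀ x ∈ Ω, ∀ u ∈ U, (∑ k, H i k * f x u k) ≤ F i (x, u))
    (u : Fin nv → (Fin m → ℝ)) (hu : ∀ p, u p ∈ U)
    (hvert : ∀ i p, F i (v p, u p) ≤ lam - φW (H i)) :
    ∀ x ∈ Ω, ∃ u' ∈ U, ∀ w ∈ W, ∀ i, (∑ k, H i k * (f x u' k + w k)) ≤ lam :=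
  stmt7_general H Ω v hΩhull U hU W hWbd φW hφW lam f F hFconv hFub u hu hvert
end

section
/- Enlarging step preserves contractiveness: if Ω = conv{v¹,…,v^{n_v}} satisfies the vertex condition F_i(v^p, u^p) ≤ λ − φ_W(H_i) for all facets i of a polytope Ω̂ = conv(Ω ∪ {x̂}) with Ω̂ = {x : Ĥx ≤ 1}, and additionally there exists û ∈ U with F̂_i(x̂, û) ≤ λ − φ_W(Ĥ_i) for all facets i of Ω̂, where F̂_i is jointly convex and upper bounds ⟨Ĥ_i, f⟩, and the original vertices also satisfy F̂_i(v^p, u^p) ≤ λ − φ_W(Ĥ_i), then for every x ∈ Ω̂ there exists u ∈ U with f(x,u) + w ∈ λΩ̂ for all w ∈ W. -/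
/-!
Choose, at every point `s` of `S = {v¹, …, v^{nv}, x̂}`, an input `u_s ∈ U` satisfying the
bounds `F̂ i (s, u_s) ≤ λ - φ_W(Ĥ i)`. By joint convexity of the `F̂ i` the set of pairs
`(x, u) ∈ Ω̂ × U` satisfying all these bounds is convex, hence so is its projection onto the
state space; since it contains `S`, it contains `conv S = Ω̂`. For the resulting `(x, u)`,
`⟨Ĥ i, f x u + w⟩ ≤ F̂ i (x, u) + φ_W(Ĥ i) ≤ λ`.
-/

open Set

section ConvexControl

variable {E V ι : Type*} [AddCommGroup E] [Module ℝ E] [AddCommGroup V] [Module ℝ V]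
  {Ω : Set E} {U : Set V} {F : ι → E × V → ℝ} {b : ι → ℝ}

theorem convex_image_fst_setOf_forall_le (hΩ : Convex ℝ Ω) (hU : Convex ℝ U)
    (hF : ∀ i, ConvexOn ℝ (Ω ×ˢ U) (F i)) :
    Convex ℝ (Prod.fst '' {p ∈ Ω ×ˢ U | ∀ i, F i p ≤ b i}) := by
  have hset : {p ∈ Ω ×ˢ U | ∀ i, F i p ≤ b i} =
      (Ω ×ˢ U) ∩ ⋂ i, {p ∈ Ω ×ˢ U | F i p ≤ b i} := by
    ext p
    simp only [mem_ofPred_eq, mem_inter_iff, mem_iInter]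
    exact ⟨fun h => ⟨h.1, fun i => ⟨h.1, h.2 i⟩⟩, fun h => ⟨h.1, fun i => (h.2 i).2⟩⟩
  rw [hset]
  exact ((hΩ.prod hU).inter (convex_iInter fun i => (hF i).convex_le (b i))).linear_image
    (LinearMap.fst ℝ E V)

theorem exists_forall_le_of_mem_convexHull {S : Set E} (hΩ : Convex ℝ Ω) (hU : Convex ℝ U)
    (hF : ∀ i, ConvexOn ℝ (Ω ×ˢ U) (F i)) (hSΩ : S ⊆ Ω)
    (hS : ∀ s ∈ S, ∃ u ∈ U, ∀ i, F i (s, u) ≤ b i) {x : E} (hx : x ∈ convexHull ℝ S) :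
    ∃ u ∈ U, ∀ i, F i (x, u) ≤ b i := by
  have hsub : S ⊆ Prod.fst '' {p ∈ Ω ×ˢ U | ∀ i, F i p ≤ b i} := fun s hs => by
    obtain ⟨u, hu, hFu⟩ := hS s hs
    exact ⟨(s, u), ⟨⟨hSΩ hs, hu⟩, hFu⟩, rfl⟩
  obtain ⟨⟨x', u⟩, ⟨⟨-, hu⟩, hFu⟩, rfl⟩ :=
    convexHull_min hsub (convex_image_fst_setOf_forall_le hΩ hU hF) hx
  exact ⟨u, hu, hFu⟩

end ConvexControl

theorem ContinuousLinearMap.le_csSup_image_of_isBounded {E : Type*} [SeminormedAddCommGroup E]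
    [NormedSpace ℝ E] (ℓ : E →L[ℝ] ℝ) {W : Set E} (hW : Bornology.IsBounded W) {w : E}
    (hw : w ∈ W) : ℓ w ≤ sSup (ℓ '' W) :=
  le_csSup (ℓ.lipschitz.isBounded_image hW).bddAbove (mem_image_of_mem ℓ hw)

theorem stmt16_general {n m nh nv : ℕ} (Hhat : Fin nh → (Fin n → ℝ))
    (v : Fin nv → (Fin n → ℝ)) (xhat : Fin n → ℝ)
    (Ωhat : Set (Fin n → ℝ))
    (hΩhull : Ωhat = convexHull ℝ (Set.range v ∪ {xhat}))
    (U : Set (Fin m → ℝ)) (hU : Convex ℝ U)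
    (W : Set (Fin n → ℝ)) (hWbd : Bornology.IsBounded W)
    (φW : (Fin n → ℝ) → ℝ)
    (hφW : ∀ c, φW c = sSup ((fun w => ∑ i, c i * w i) '' W))
    (lam : ℝ)
    (f : (Fin n → ℝ) → (Fin m → ℝ) → (Fin n → ℝ))
    (F : Fin nh → ((Fin n → ℝ) × (Fin m → ℝ)) → ℝ)
    (hFconv : ∀ i, ConvexOn ℝ (Ωhat ×ˢ U) (F i))
    (hFub : ∀ i, ∀ x ∈ Ωhat, ∀ u ∈ U, (∑ k, Hhat i k * f x u k) ≤ F i (x, u))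
    (u : Fin nv → (Fin m → ℝ)) (hu : ∀ p, u p ∈ U)
    (hvert : ∀ i p, F i (v p, u p) ≤ lam - φW (Hhat i))
    (uhat : Fin m → ℝ) (huhat : uhat ∈ U)
    (hnew : ∀ i, F i (xhat, uhat) ≤ lam - φW (Hhat i)) :
    ∀ x ∈ Ωhat, ∃ u' ∈ U, ∀ w ∈ W, ∀ i,
      (∑ k, Hhat i k * (f x u' k + w k)) ≤ lam := by
  intro x hx
  have hvertices : ∀ s ∈ range v ∪ {xhat}, ∃ u' ∈ U, ∀ i, F i (s, u') ≤ lam - φW (Hhat i) := by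
    rintro s (⟨p, rfl⟩ | rfl)
    exacts [⟨u p, hu p, fun i => hvert i p⟩, ⟨uhat, huhat, hnew⟩]
  subst hΩhull
  obtain ⟨u', hu', hFu'⟩ := exists_forall_le_of_mem_convexHull (convex_convexHull ℝ _) hU
    hFconv (subset_convexHull ℝ _) hvertices hx
  refine ⟨u', hu', fun w hw i => ?_⟩
  have hsupport : ∑ k, Hhat i k * w k ≤ φW (Hhat i) := by
    rw [hφW]
    exact (dotProductBilin ℝ ℝ (Hhat i)).toContinuousLinearMap.le_csSup_image_of_isBounded
      hWbd hw
  simp only [mul_add, Finset.sum_add_distrib]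
  linarith [hFub i x hx u' hu', hFu' i]

/-- Enlarging step preserves contractiveness: if `Ω̂ = conv{v¹,…,v^{nv}, x̂} = {x : Ĥx ≤ 1}`,
each `F̂ i` is jointly convex on `Ω̂ × U` and upper bounds `⟨Ĥ i, f(·,·)⟩` there, the
original vertices satisfy `F̂ i (v p, u p) ≤ λ − φ_W(Ĥ i)` with `u p ∈ U`, and the new
point satisfies `F̂ i (x̂, û) ≤ λ − φ_W(Ĥ i)` with `û ∈ U`, then for every `x ∈ Ω̂` there
exists `u ∈ U` with `f x u + w ∈ λΩ̂ = {x : Ĥx ≤ λ·1}` for all `w ∈ W`. -/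
theorem stmt16 {n m nh nv : ℕ} (Hhat : Fin nh → (Fin n → ℝ))
    (v : Fin nv → (Fin n → ℝ)) (xhat : Fin n → ℝ)
    (Ωhat : Set (Fin n → ℝ))
    (hΩhull : Ωhat = convexHull ℝ (Set.range v ∪ {xhat}))
    (hΩdef : Ωhat = {x | ∀ i, (∑ k, Hhat i k * x k) ≤ 1})
    (U : Set (Fin m → ℝ)) (hU : Convex ℝ U)
    (W : Set (Fin n → ℝ)) (hWne : W.Nonempty) (hWbd : Bornology.IsBounded W)
    (φW : (Fin n → ℝ) → ℝ)
    (hφW : ∀ c, φW c = sSup ((fun w => ∑ i, c i * w i) '' W))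
    (lam : ℝ) (hlam : lam ∈ Set.Icc (0 : ℝ) 1)
    (f : (Fin n → ℝ) → (Fin m → ℝ) → (Fin n → ℝ))
    (F : Fin nh → ((Fin n → ℝ) × (Fin m → ℝ)) → ℝ)
    (hFconv : ∀ i, ConvexOn ℝ (Ωhat ×ˢ U) (F i))
    (hFub : ∀ i, ∀ x ∈ Ωhat, ∀ u ∈ U, (∑ k, Hhat i k * f x u k) ≤ F i (x, u))
    (u : Fin nv → (Fin m → ℝ)) (hu : ∀ p, u p ∈ U)
    (hvert : ∀ i p, F i (v p, u p) ≤ lam - φW (Hhat i))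
    (uhat : Fin m → ℝ) (huhat : uhat ∈ U)
    (hnew : ∀ i, F i (xhat, uhat) ≤ lam - φW (Hhat i)) :
    ∀ x ∈ Ωhat, ∃ u' ∈ U, ∀ w ∈ W, ∀ i,
      (∑ k, Hhat i k * (f x u' k + w k)) ≤ lam :=
  stmt16_general Hhat v xhat Ωhat hΩhull U hU W hWbd φW hφW lam f F hFconv hFub u hu hvert uhat
    huhat hnew
end
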